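/- Let M ∈ ℝⁿˣⁿ be symmetric positive semidefinite with eigenvalues λ₁ > λ₂ ≥ … ≥ λₙ ≥ 0 and orthonormal eigenvectors u₁, …, uₙ, and let f(x) = (1/4)·‖xxᵀ − M‖_F², whose Hessian is ∇²f(x) = ‖x‖₂²·Iₙ + 2·xxᵀ − M. Then for every x ∈ ℝⁿ with ‖x − √λ₁·u₁‖₂ ≤ (λ₁ − λ₂)/(15·√λ₁), one has 0.25·(λ₁ − λ₂)·Iₙ ⪯ ∇²f(x) ⪯ 4.5·λ₁·Iₙ. -/

import Mathlib

open Matrix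

/-!
Write `x = √λ₁ u₁ + e` with `‖e‖ ≤ δ := (λ₁ - λ₂) / (15 √λ₁) ≤ √λ₁ / 15`. The spectral
decomposition gives `0 ≤ vᵀ M v ≤ λ₂ ‖v‖² + (λ₁ - λ₂) ⟪u₁, v⟫²` (Bessel's inequality).
Since `‖x‖² ≥ λ₁ - 2 √λ₁ δ` and `2 ⟪x, v⟫² ≥ λ₁ ⟪u₁, v⟫² - 2 δ² ‖v‖²`, the quadratic form of the
Hessian is at least `(λ₁ - λ₂ - 2 √λ₁ δ - 2 δ²) ‖v‖²`, and the perturbation is at most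
`(32 / 225) (λ₁ - λ₂)`. Conversely, by Cauchy–Schwarz the form is at most
`3 ‖x‖² ‖v‖² ≤ 3 (16 / 15)² λ₁ ‖v‖²`.
-/

/-- The Euclidean (ℓ₂) norm of a vector in `ℝⁿ`. -/
noncomputable def l2norm {p : ℕ} (v : Fin p → ℝ) : ℝ :=
  Real.sqrt (∑ i, v i ^ 2)

lemma l2norm_sq {p : ℕ} (v : Fin p → ℝ) : l2norm v ^ 2 = v ⬝ᵥ v := by
  rw [l2norm, Real.sq_sqrt (by positivity)]
  simp [dotProduct, sq]

section DotProduct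

variable {ι : Type*} [Fintype ι]

lemma sq_dotProduct_le (v w : ι → ℝ) : (v ⬝ᵥ w) ^ 2 ≤ (v ⬝ᵥ v) * (w ⬝ᵥ w) := by
  simpa [dotProduct, sq] using Finset.sum_mul_sq_le_sq_mul_sq Finset.univ v w

lemma sum_sq_dotProduct_le {κ : Type*} [Fintype κ] [DecidableEq κ] {u : κ → ι → ℝ}
    (hu : ∀ i j, u i ⬝ᵥ u j = if i = j then 1 else 0) (v : ι → ℝ) :
    ∑ i, (u i ⬝ᵥ v) ^ 2 ≤ v ⬝ᵥ v := by
  have hon : Orthonormal ℝ fun i ↦ WithLp.toLp 2 (u i) :=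
    orthonormal_iff_ite.mpr fun i j ↦ by
      simpa [EuclideanSpace.inner_toLp_toLp, dotProduct_comm (u j)] using hu i j
  calc ∑ i, (u i ⬝ᵥ v) ^ 2 = ∑ i, ‖inner ℝ (WithLp.toLp 2 (u i)) (WithLp.toLp 2 v)‖ ^ 2 := by
        simp [EuclideanSpace.inner_toLp_toLp, dotProduct_comm v]
    _ ≤ ‖WithLp.toLp 2 v‖ ^ 2 := hon.sum_inner_products_le _
    _ = v ⬝ᵥ v := by rw [← real_inner_self_eq_norm_sq, EuclideanSpace.inner_toLp_toLp, star_trivial]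

lemma dotProduct_sum_smul_vecMulVec_mulVec {κ : Type*} [Fintype κ] (lam : κ → ℝ)
    (u : κ → ι → ℝ) (v : ι → ℝ) :
    v ⬝ᵥ ((∑ i, lam i • vecMulVec (u i) (u i)) *ᵥ v) = ∑ i, lam i * (u i ⬝ᵥ v) ^ 2 := by
  rw [sum_mulVec, dotProduct_sum]
  simp [smul_mulVec, vecMulVec_mulVec, dotProduct_comm v, sq]

end DotProduct

section Spectral

variable {ι κ : Type*} [Fintype ι] [Fintype κ]

lemma posSemidef_sum_smul_vecMulVec {lam : κ → ℝ} (hlam : ∀ i, 0 ≤ lam i) (u : κ → ι → ℝ) :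
    (∑ i, lam i • vecMulVec (u i) (u i)).PosSemidef :=
  posSemidef_sum _ fun i _ ↦ by
    simpa using (posSemidef_vecMulVec_self_star (u i)).smul (hlam i)

lemma sum_mul_sq_dotProduct_le [DecidableEq κ] {lam : κ → ℝ} {u : κ → ι → ℝ}
    (hu : ∀ i j, u i ⬝ᵥ u j = if i = j then 1 else 0) {i₀ : κ} {β : ℝ} (hβ : 0 ≤ β)
    (hlam : ∀ i, i ≠ i₀ → lam i ≤ β) (v : ι → ℝ) :
    ∑ i, lam i * (u i ⬝ᵥ v) ^ 2 ≤ β * (v ⬝ᵥ v) + (lam i₀ - β) * (u i₀ ⬝ᵥ v) ^ 2 := by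
  have hrest : ∑ i ∈ {i₀}ᶜ, (lam i - β) * (u i ⬝ᵥ v) ^ 2 ≤ 0 :=
    Finset.sum_nonpos fun i hi ↦ mul_nonpos_of_nonpos_of_nonneg
      (sub_nonpos.mpr (hlam i (by simpa using hi))) (sq_nonneg _)
  calc ∑ i, lam i * (u i ⬝ᵥ v) ^ 2
      = β * ∑ i, (u i ⬝ᵥ v) ^ 2 + ∑ i, (lam i - β) * (u i ⬝ᵥ v) ^ 2 := by
        rw [Finset.mul_sum, ← Finset.sum_add_distrib]
        exact Finset.sum_congr rfl fun i _ ↦ by ring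
    _ = β * ∑ i, (u i ⬝ᵥ v) ^ 2 + ((lam i₀ - β) * (u i₀ ⬝ᵥ v) ^ 2
          + ∑ i ∈ {i₀}ᶜ, (lam i - β) * (u i ⬝ᵥ v) ^ 2) := by
        rw [Fintype.sum_eq_add_sum_compl i₀ fun i ↦ (lam i - β) * (u i ⬝ᵥ v) ^ 2]
    _ ≤ β * (v ⬝ᵥ v) + ((lam i₀ - β) * (u i₀ ⬝ᵥ v) ^ 2 + 0) := by
        gcongr
        exact sum_sq_dotProduct_le hu v
    _ = β * (v ⬝ᵥ v) + (lam i₀ - β) * (u i₀ ⬝ᵥ v) ^ 2 := by rw [add_zero]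

end Spectral

section Hessian

variable {ι : Type*} [Fintype ι] [DecidableEq ι]

lemma posSemidef_sub_smul_one_of_forall_le {A : Matrix ι ι ℝ} (hA : A.IsHermitian) {c : ℝ}
    (h : ∀ v, c * (v ⬝ᵥ v) ≤ v ⬝ᵥ (A *ᵥ v)) : (A - c • 1).PosSemidef :=
  .of_dotProduct_mulVec_nonneg (hA.sub (isHermitian_one.smul (IsSelfAdjoint.all c))) fun v ↦ by
    simpa [sub_mulVec, smul_mulVec] using h v

lemma posSemidef_smul_one_sub_of_forall_le {A : Matrix ι ι ℝ} (hA : A.IsHermitian) {c : ℝ}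
    (h : ∀ v, v ⬝ᵥ (A *ᵥ v) ≤ c * (v ⬝ᵥ v)) : (c • 1 - A).PosSemidef :=
  .of_dotProduct_mulVec_nonneg ((isHermitian_one.smul (IsSelfAdjoint.all c)).sub hA) fun v ↦ by
    simpa [sub_mulVec, smul_mulVec] using h v

/-- The Hessian of `x ↦ ¼ ‖x xᵀ - M‖_F²`. -/
noncomputable def factorizationHessian (M : Matrix ι ι ℝ) (x : ι → ℝ) : Matrix ι ι ℝ :=
  (x ⬝ᵥ x) • 1 + (2 : ℝ) • vecMulVec x x - M

lemma Matrix.IsHermitian.factorizationHessian {M : Matrix ι ι ℝ} (hM : M.IsHermitian)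
    (x : ι → ℝ) : (factorizationHessian M x).IsHermitian := by
  have hxx : (vecMulVec x x).IsHermitian := by
    simpa using (posSemidef_vecMulVec_self_star x).isHermitian
  exact ((isHermitian_one.smul (IsSelfAdjoint.all _)).add
    (hxx.smul (IsSelfAdjoint.all _))).sub hM

lemma dotProduct_factorizationHessian_mulVec (M : Matrix ι ι ℝ) (x v : ι → ℝ) :
    v ⬝ᵥ (factorizationHessian M x *ᵥ v)
      = (x ⬝ᵥ x) * (v ⬝ᵥ v) + 2 * (x ⬝ᵥ v) ^ 2 - v ⬝ᵥ (M *ᵥ v) := by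
  simp only [factorizationHessian, sub_mulVec, add_mulVec, smul_mulVec, one_mulVec,
    vecMulVec_mulVec, dotProduct_sub, dotProduct_add, dotProduct_smul, dotProduct_comm v x]
  simp only [MulOpposite.smul_eq_mul_unop, MulOpposite.unop_op, smul_eq_mul]
  ring

end Hessian

section NearTopEigenvector

variable {ι : Type*} [Fintype ι]

lemma dotProduct_self_bounds_of_near {u x : ι → ℝ} {σ δ : ℝ} (hu : u ⬝ᵥ u = 1) (hσ : 0 ≤ σ)
    (hδ : 0 ≤ δ) (hx : (x - σ • u) ⬝ᵥ (x - σ • u) ≤ δ ^ 2) :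
    σ ^ 2 - 2 * σ * δ ≤ x ⬝ᵥ x ∧ x ⬝ᵥ x ≤ (σ + δ) ^ 2 := by
  set e := x - σ • u
  have hxe : x = σ • u + e := by simp [e]
  have hee : 0 ≤ e ⬝ᵥ e := Finset.sum_nonneg fun i _ ↦ mul_self_nonneg (e i)
  have hr : |u ⬝ᵥ e| ≤ δ := abs_le_of_sq_le_sq (by nlinarith [sq_dotProduct_le u e]) hδ
  have hxx : x ⬝ᵥ x = σ ^ 2 + 2 * σ * (u ⬝ᵥ e) + e ⬝ᵥ e := by
    rw [hxe]
    simp only [add_dotProduct, dotProduct_add, smul_dotProduct, dotProduct_smul, smul_eq_mul,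
      hu, dotProduct_comm e u]
    ring
  have hσr : |σ * (u ⬝ᵥ e)| ≤ σ * δ := by
    rw [abs_mul, abs_of_nonneg hσ]
    exact mul_le_mul_of_nonneg_left hr hσ
  constructor <;> nlinarith [abs_le.mp hσr]

lemma le_two_mul_sq_dotProduct_of_near {u x : ι → ℝ} {σ δ : ℝ}
    (hx : (x - σ • u) ⬝ᵥ (x - σ • u) ≤ δ ^ 2) (v : ι → ℝ) :
    σ ^ 2 * (u ⬝ᵥ v) ^ 2 - 2 * δ ^ 2 * (v ⬝ᵥ v) ≤ 2 * (x ⬝ᵥ v) ^ 2 := by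
  set e := x - σ • u
  have hxv : x ⬝ᵥ v = σ * (u ⬝ᵥ v) + e ⬝ᵥ v := by
    simp [e, sub_dotProduct, smul_dotProduct]
  have hvv : 0 ≤ v ⬝ᵥ v := Finset.sum_nonneg fun i _ ↦ mul_self_nonneg (v i)
  have hev : (e ⬝ᵥ v) ^ 2 ≤ δ ^ 2 * (v ⬝ᵥ v) :=
    (sq_dotProduct_le e v).trans (mul_le_mul_of_nonneg_right hx hvv)
  rw [hxv]
  nlinarith [sq_nonneg (σ * (u ⬝ᵥ v) + 2 * (e ⬝ᵥ v))]

variable [DecidableEq ι] {M : Matrix ι ι ℝ} {u x : ι → ℝ} {a b δ : ℝ}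

lemma le_dotProduct_factorizationHessian_mulVec (hu : u ⬝ᵥ u = 1) (hb : 0 ≤ b) (hδ : 0 ≤ δ)
    (hδa : 15 * δ ≤ √a) (hx : (x - √a • u) ⬝ᵥ (x - √a • u) ≤ δ ^ 2)
    (hgap : 15 * √a * δ ≤ a - b)
    (hM : ∀ v, v ⬝ᵥ (M *ᵥ v) ≤ b * (v ⬝ᵥ v) + (a - b) * (u ⬝ᵥ v) ^ 2) (v : ι → ℝ) :
    0.25 * (a - b) * (v ⬝ᵥ v) ≤ v ⬝ᵥ (factorizationHessian M x *ᵥ v) := by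
  have ha : 0 ≤ a := by nlinarith [Real.sqrt_nonneg a]
  have hxx := (dotProduct_self_bounds_of_near hu (Real.sqrt_nonneg a) hδ hx).1
  have hxv := le_two_mul_sq_dotProduct_of_near hx v
  rw [Real.sq_sqrt ha] at hxx hxv
  have hvv : 0 ≤ v ⬝ᵥ v := Finset.sum_nonneg fun i _ ↦ mul_self_nonneg (v i)
  have hcoef : 0.25 * (a - b) ≤ a - b - 2 * √a * δ - 2 * δ ^ 2 := by
    nlinarith [mul_le_mul_of_nonneg_left hδa hδ]
  rw [dotProduct_factorizationHessian_mulVec]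
  nlinarith [hM v, mul_le_mul_of_nonneg_right hxx hvv, mul_le_mul_of_nonneg_right hcoef hvv,
    mul_nonneg hb (sq_nonneg (u ⬝ᵥ v))]

lemma dotProduct_factorizationHessian_mulVec_le (hM : M.PosSemidef) (hu : u ⬝ᵥ u = 1)
    (ha : 0 ≤ a) (hδ : 0 ≤ δ) (hδa : 15 * δ ≤ √a)
    (hx : (x - √a • u) ⬝ᵥ (x - √a • u) ≤ δ ^ 2) (v : ι → ℝ) :
    v ⬝ᵥ (factorizationHessian M x *ᵥ v) ≤ 4.5 * a * (v ⬝ᵥ v) := by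
  have hxx := (dotProduct_self_bounds_of_near hu (Real.sqrt_nonneg a) hδ hx).2
  have hvv : 0 ≤ v ⬝ᵥ v := Finset.sum_nonneg fun i _ ↦ mul_self_nonneg (v i)
  have hcoef : 3 * (√a + δ) ^ 2 ≤ 4.5 * a := by
    nlinarith [Real.sq_sqrt ha, Real.sqrt_nonneg a]
  have hMv : 0 ≤ v ⬝ᵥ (M *ᵥ v) := by simpa using hM.dotProduct_mulVec_nonneg v
  rw [dotProduct_factorizationHessian_mulVec]
  nlinarith [sq_dotProduct_le x v, mul_le_mul_of_nonneg_right hxx hvv,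
    mul_le_mul_of_nonneg_right hcoef hvv]

end NearTopEigenvector

/-- **Local strong convexity and smoothness for rank-1 matrix factorization.**
Let `M = ∑ᵢ λᵢ uᵢuᵢᵀ` be symmetric PSD with `λ₁ > λ₂ ≥ … ≥ λₙ ≥ 0`, orthonormal `uᵢ`, and
`f(x) = ¼‖xxᵀ − M‖_F²` with Hessian `∇²f(x) = ‖x‖₂² Iₙ + 2xxᵀ − M`. Then for every `x` with
`‖x − √λ₁ u₁‖₂ ≤ (λ₁ − λ₂)/(15√λ₁)`, one has
`0.25 (λ₁ − λ₂) Iₙ ⪯ ∇²f(x) ⪯ 4.5 λ₁ Iₙ`. -/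
theorem rank_one_factorization_local_hessian_bounds
    (n : ℕ) (hn : 1 < n)
    (M : Matrix (Fin n) (Fin n) ℝ)
    (lam : Fin n → ℝ) (u : Fin n → (Fin n → ℝ))
    (horth : ∀ i j : Fin n, dotProduct (u i) (u j) = if i = j then 1 else 0)
    (hdecomp : M = ∑ i, lam i • Matrix.vecMulVec (u i) (u i))
    (hmono : Antitone lam)
    (hnonneg : ∀ i, 0 ≤ lam i)
    (hgap : lam ⟨1, hn⟩ < lam ⟨0, by omega⟩)
    (x : Fin n → ℝ)
    (hx : l2norm (x - Real.sqrt (lam ⟨0, by omega⟩) • u ⟨0, by omega⟩)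
      ≤ (lam ⟨0, by omega⟩ - lam ⟨1, hn⟩) / (15 * Real.sqrt (lam ⟨0, by omega⟩))) :
    ((l2norm x ^ 2 • (1 : Matrix (Fin n) (Fin n) ℝ) + (2 : ℝ) • Matrix.vecMulVec x x - M)
        - (0.25 * (lam ⟨0, by omega⟩ - lam ⟨1, hn⟩)) • (1 : Matrix (Fin n) (Fin n) ℝ)).PosSemidef
    ∧ ((4.5 * lam ⟨0, by omega⟩) • (1 : Matrix (Fin n) (Fin n) ℝ)
        - (l2norm x ^ 2 • (1 : Matrix (Fin n) (Fin n) ℝ) + (2 : ℝ) • Matrix.vecMulVec x x - M)).PosSemidef := by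
  set i₀ : Fin n := ⟨0, by omega⟩
  set a := lam i₀
  set b := lam ⟨1, hn⟩
  set δ := (a - b) / (15 * √a)
  have hb : 0 ≤ b := hnonneg _
  have hσ : 0 < √a := Real.sqrt_pos.mpr (hb.trans_lt hgap)
  have hδ : 0 ≤ δ := div_nonneg (sub_nonneg.mpr hgap.le) (by positivity)
  have hδ_eq : 15 * √a * δ = a - b := mul_div_cancel₀ _ (by positivity)
  have hδa : 15 * δ ≤ √a := by nlinarith [Real.mul_self_sqrt (hb.trans hgap.le)]
  have hu : u i₀ ⬝ᵥ u i₀ = 1 := by simpa using horth i₀ i₀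
  have hx' : (x - √a • u i₀) ⬝ᵥ (x - √a • u i₀) ≤ δ ^ 2 := by
    rw [← l2norm_sq]
    exact pow_le_pow_left₀ (Real.sqrt_nonneg _) hx 2
  have hMpsd : M.PosSemidef := hdecomp ▸ posSemidef_sum_smul_vecMulVec hnonneg u
  have hMle : ∀ v, v ⬝ᵥ (M *ᵥ v) ≤ b * (v ⬝ᵥ v) + (a - b) * (u i₀ ⬝ᵥ v) ^ 2 := fun v ↦ by
    rw [hdecomp, dotProduct_sum_smul_vecMulVec_mulVec]
    refine sum_mul_sq_dotProduct_le horth hb (fun i hi ↦ hmono ?_) v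
    have : i.val ≠ 0 := fun h ↦ hi (Fin.ext h)
    exact Fin.mk_le_of_le_val (by omega)
  rw [l2norm_sq]
  exact ⟨posSemidef_sub_smul_one_of_forall_le (hMpsd.isHermitian.factorizationHessian x)
      (le_dotProduct_factorizationHessian_mulVec hu hb hδ hδa hx' hδ_eq.le hMle),
    posSemidef_smul_one_sub_of_forall_le (hMpsd.isHermitian.factorizationHessian x)
      (dotProduct_factorizationHessian_mulVec_le hMpsd hu (hb.trans hgap.le) hδ hδa hx')⟩
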